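/- Let 0 < α ≤ 1, let μ be a Borel probability measure on ℝ which is uniformly α-Hölder continuous, let (a_n)_{n ∈ ℕ} be nonzero reals, let (σ_n)_{n ∈ ℕ} be Borel probability measures on ℝ, and let (ν_n)_{n ∈ ℕ} be Borel probability measures on ℝ such that for each n, every E ∈ ℝ and every a > 0, Im F_{ν_n}(E + ia) = Im(∫_ℝ 1/(a_n·x + F_{σ_n}(E + ia)⁻¹) dμ(x)). Then each ν_n is uniformly α-Hölder continuous with d_{ν_n}^{α,∞} ≤ 2^{2−α}·π·|a_n|^{−α}·d_μ^{α,∞}; moreover, if β_n > 0 satisfy Σ_n β_n = 1 and Σ_n β_n |a_n|^{−α} < ∞, then ν = Σ_n β_n ν_n is uniformly α-Hölder continuous with d_ν^{α,∞} ≤ 2^{2−α}·π·d_μ^{α,∞}·Σ_n β_n |a_n|^{−α}. -/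

import Mathlib

open MeasureTheory Complex Set

/-- The Borel transform of a measure `σ` on `ℝ`: `F_σ(z) = ∫ 1/(x - z) dσ(x)`. -/
noncomputable def borelTransform (σ : Measure ℝ) (z : ℂ) : ℂ :=
  ∫ x : ℝ, ((x : ℂ) - z)⁻¹ ∂σ

/-- `d_μ^{α,∞} = sup_{x ∈ ℝ} sup_{ε > 0} μ((x−ε, x+ε))/(2ε)^α`. -/
noncomputable def dAlpha (μ : Measure ℝ) (α : ℝ) : ENNReal :=
  ⨆ (x : ℝ) (ε : ℝ) (_ : 0 < ε),
    μ (Set.Ioo (x - ε) (x + ε)) / ENNReal.ofReal ((2 * ε) ^ α)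

/-!
Write `P_t(y) = t / (y² + t²)`, so that `Im F_ρ(E + iε) = ∫ P_ε(x - E) dρ ≥ ρ((E-ε, E+ε)) / (2ε)`.
Put `w = F_σ(E + iε)⁻¹` and `v = -Im w`; the hypothesis turns `Im F_ν(E + iε)` into
`∫ P_v(a x + Re w) dμ(x)`. Jensen's inequality for `‖·‖²` gives `ε |F_σ|² ≤ Im F_σ`, i.e. `v ≥ ε`.
The superlevel sets `{P_v(a x + u) > s}` lie in intervals of radius `√(v/s) / |a|`, so the
layer-cake formula and the Hölder bound on `μ` give `∫ P_v(a x + u) dμ ≤ 2 d_μ (2/|a|)^α v^(α-1)`,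
and `v^(α-1) ≤ ε^(α-1)` because `α ≤ 1`. Altogether `ν((E-ε, E+ε)) ≤ 4 |a|^(-α) d_μ (2ε)^α`,
and `4 ≤ 2^(2-α) π`. The bound for the mixture is countable subadditivity of the supremum.
-/

/-- The Poisson kernel of the upper half-plane, without the factor `π⁻¹`. -/
noncomputable def upperPoissonKernel (t y : ℝ) : ℝ := t / (y ^ 2 + t ^ 2)

section PoissonKernel

variable {t : ℝ}

lemma upperPoissonKernel_nonneg (ht : 0 < t) (y : ℝ) : 0 ≤ upperPoissonKernel t y := by
  unfold upperPoissonKernel; positivity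

lemma upperPoissonKernel_pos (ht : 0 < t) (y : ℝ) : 0 < upperPoissonKernel t y := by
  unfold upperPoissonKernel; positivity

lemma upperPoissonKernel_le (ht : 0 < t) (y : ℝ) : upperPoissonKernel t y ≤ t⁻¹ := by
  rw [upperPoissonKernel, div_le_iff₀ (by positivity)]
  field_simp
  nlinarith [sq_nonneg y]

lemma continuous_upperPoissonKernel (ht : 0 < t) : Continuous (upperPoissonKernel t) :=
  continuous_const.div (by fun_prop) fun y => by positivity

lemma inv_two_mul_le_upperPoissonKernel (ht : 0 < t) {y : ℝ} (hy : |y| < t) :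
    (2 * t)⁻¹ ≤ upperPoissonKernel t y := by
  have : y ^ 2 < t ^ 2 := sq_lt_sq' (abs_lt.1 hy).1 (abs_lt.1 hy).2
  rw [upperPoissonKernel, le_div_iff₀ (by positivity)]
  field_simp
  linarith

lemma abs_lt_of_lt_upperPoissonKernel (ht : 0 < t) {s y : ℝ} (hs : 0 < s)
    (hy : s < upperPoissonKernel t y) : |y| < √(t / s) := by
  rw [← Real.sqrt_sq_eq_abs]
  refine Real.sqrt_lt_sqrt (sq_nonneg y) ?_
  rw [upperPoissonKernel, lt_div_iff₀ (by positivity)] at hy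
  rw [lt_div_iff₀ hs]
  nlinarith [sq_nonneg t]

lemma integrable_upperPoissonKernel_sub {ρ : Measure ℝ} [IsFiniteMeasure ρ] (ht : 0 < t) (a : ℝ) :
    Integrable (fun x => upperPoissonKernel t (x - a)) ρ := by
  refine .of_bound
    ((continuous_upperPoissonKernel ht).comp (continuous_sub_right a)).aestronglyMeasurable
    t⁻¹ (.of_forall fun x => ?_)
  rw [Real.norm_of_nonneg (upperPoissonKernel_nonneg ht _)]
  exact upperPoissonKernel_le ht _

end PoissonKernel

lemma norm_inv_le_inv_abs_im {w : ℂ} (hw : w.im ≠ 0) : ‖w⁻¹‖ ≤ |w.im|⁻¹ := by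
  rw [norm_inv]
  exact inv_anti₀ (abs_pos.2 hw) (Complex.abs_im_le_norm w)

lemma im_inv_eq_upperPoissonKernel (w : ℂ) : (w⁻¹).im = upperPoissonKernel (-w.im) w.re := by
  rw [Complex.inv_im, Complex.normSq_apply, upperPoissonKernel]
  ring

lemma integrable_inv_of_im_eq {X : Type*} [MeasurableSpace X] {ρ : Measure X}
    [IsFiniteMeasure ρ] {f : X → ℂ} (hf : Measurable f) {b : ℝ} (hb : b ≠ 0)
    (him : ∀ x, (f x).im = b) : Integrable (fun x => (f x)⁻¹) ρ := by
  refine .of_bound hf.inv.aestronglyMeasurable |b|⁻¹ (.of_forall fun x => ?_)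
  rw [← him x]
  exact norm_inv_le_inv_abs_im (by rw [him x]; exact hb)

lemma sq_norm_integral_le_integral_sq_norm {X E : Type*} [MeasurableSpace X] {ρ : Measure X}
    [IsProbabilityMeasure ρ] [NormedAddCommGroup E] [NormedSpace ℝ E] [CompleteSpace E]
    {f : X → E} (hf : Integrable f ρ) (hf2 : Integrable (fun x => ‖f x‖ ^ 2) ρ) :
    ‖∫ x, f x ∂ρ‖ ^ 2 ≤ ∫ x, ‖f x‖ ^ 2 ∂ρ :=
  ((convexOn_univ_norm).pow (fun _ _ => norm_nonneg _) 2).map_integral_le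
    (continuous_norm.pow 2).continuousOn isClosed_univ (.of_forall fun _ => mem_univ _) hf hf2

section BorelTransform

variable {ρ : Measure ℝ} {z : ℂ}

lemma im_inv_ofReal_sub (z : ℂ) (x : ℝ) :
    (((x : ℂ) - z)⁻¹).im = upperPoissonKernel z.im (x - z.re) := by
  rw [im_inv_eq_upperPoissonKernel]
  simp

lemma sq_norm_inv_ofReal_sub (hz : z.im ≠ 0) (x : ℝ) :
    ‖((x : ℂ) - z)⁻¹‖ ^ 2 = upperPoissonKernel z.im (x - z.re) / z.im := by
  rw [norm_inv, inv_pow, Complex.sq_norm, Complex.normSq_apply, upperPoissonKernel]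
  simp only [sub_re, ofReal_re, sub_im, ofReal_im]
  field_simp
  ring

lemma integrable_inv_ofReal_sub [IsFiniteMeasure ρ] (hz : z.im ≠ 0) :
    Integrable (fun x : ℝ => ((x : ℂ) - z)⁻¹) ρ :=
  integrable_inv_of_im_eq (by fun_prop) (neg_ne_zero.2 hz) fun x => by simp

lemma im_borelTransform [IsFiniteMeasure ρ] (hz : z.im ≠ 0) :
    (borelTransform ρ z).im = ∫ x, upperPoissonKernel z.im (x - z.re) ∂ρ := by
  have h := integral_im (integrable_inv_ofReal_sub (ρ := ρ) hz)
  simp only [RCLike.im_to_complex, im_inv_ofReal_sub] at h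
  rw [borelTransform, h]

lemma im_borelTransform_pos [IsProbabilityMeasure ρ] (hz : 0 < z.im) :
    0 < (borelTransform ρ z).im := by
  have hk := upperPoissonKernel_pos hz
  rw [im_borelTransform hz.ne', integral_pos_iff_support_of_nonneg (fun x => (hk _).le)
    (integrable_upperPoissonKernel_sub hz _),
    Function.support_eq_univ fun x => (hk (x - z.re)).ne']
  simp

lemma mul_sq_norm_borelTransform_le_im [IsProbabilityMeasure ρ] (hz : 0 < z.im) :
    z.im * ‖borelTransform ρ z‖ ^ 2 ≤ (borelTransform ρ z).im := by
  have hsq : (fun x : ℝ => ‖((x : ℂ) - z)⁻¹‖ ^ 2)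
      = fun x => upperPoissonKernel z.im (x - z.re) / z.im :=
    funext (sq_norm_inv_ofReal_sub hz.ne')
  have jensen := sq_norm_integral_le_integral_sq_norm (integrable_inv_ofReal_sub hz.ne')
    (hsq ▸ (integrable_upperPoissonKernel_sub (ρ := ρ) hz z.re).div_const z.im)
  rw [hsq, integral_div, ← im_borelTransform hz.ne', le_div_iff₀ hz] at jensen
  rw [borelTransform, mul_comm]
  exact jensen

lemma le_neg_im_inv_borelTransform [IsProbabilityMeasure ρ] (hz : 0 < z.im) :
    z.im ≤ -((borelTransform ρ z)⁻¹).im := by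
  have hF := im_borelTransform_pos (ρ := ρ) hz
  have hF0 : borelTransform ρ z ≠ 0 := fun h => by simp [h] at hF
  rw [Complex.inv_im, neg_div, neg_neg, le_div_iff₀ (Complex.normSq_pos.2 hF0),
    ← Complex.sq_norm]
  exact mul_sq_norm_borelTransform_le_im hz

end BorelTransform

lemma setIntegral_Ioo_zero_rpow {r T : ℝ} (hr : -1 < r) (hT : 0 ≤ T) :
    ∫ s in Ioo 0 T, s ^ r = T ^ (r + 1) / (r + 1) := by
  rw [← integral_Ioc_eq_integral_Ioo, ← intervalIntegral.integral_of_le hT,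
    integral_rpow (.inl hr), Real.zero_rpow (by linarith), sub_zero]

lemma integral_le_of_meas_lt_le_rpow {X : Type*} [MeasurableSpace X] {μ : Measure X}
    {f : X → ℝ} (hf0 : ∀ x, 0 ≤ f x) (hfm : Measurable f) {A γ T : ℝ} (hA : 0 ≤ A)
    (hγ : γ < 1) (hT : 0 < T) (hfT : ∀ x, f x ≤ T)
    (hdist : ∀ s, 0 < s → s < T → μ {x | s < f x} ≤ ENNReal.ofReal (A * s ^ (-γ))) :
    ∫ x, f x ∂μ ≤ A * (T ^ (1 - γ) / (1 - γ)) := by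
  have hint : IntegrableOn (fun s : ℝ => A * s ^ (-γ)) (Ioo 0 T) :=
    ((intervalIntegral.integrableOn_Ioo_rpow_iff hT).2 (by linarith)).const_mul A
  have hvalue : ∫ s in Ioo 0 T, A * s ^ (-γ) = A * (T ^ (1 - γ) / (1 - γ)) := by
    rw [integral_const_mul, setIntegral_Ioo_zero_rpow (by linarith) hT.le, neg_add_eq_sub]
  have hlayer : ∫⁻ s in Ioi 0, μ {x | s < f x} ≤ ENNReal.ofReal (A * (T ^ (1 - γ) / (1 - γ))) :=
    calc ∫⁻ s in Ioi 0, μ {x | s < f x}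
        ≤ ∫⁻ s in Ioi 0, (Iio T).indicator (fun s => ENNReal.ofReal (A * s ^ (-γ))) s := by
          refine setLIntegral_mono' measurableSet_Ioi fun s hs => ?_
          by_cases hsT : s < T
          · rw [indicator_of_mem (mem_Iio.2 hsT)]
            exact hdist s hs hsT
          · have : {x | s < f x} = ∅ :=
              eq_empty_of_forall_notMem fun x hx => hsT (hx.trans_le (hfT x))
            simp [this]
      _ = ∫⁻ s in Ioo 0 T, ENNReal.ofReal (A * s ^ (-γ)) := by
          rw [lintegral_indicator measurableSet_Iio, Measure.restrict_restrict measurableSet_Iio,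
            Iio_inter_Ioi]
      _ = ENNReal.ofReal (A * (T ^ (1 - γ) / (1 - γ))) := by
          rw [← hvalue, ofReal_integral_eq_lintegral_ofReal hint
            ((ae_restrict_iff' measurableSet_Ioo).2 (.of_forall fun s hs =>
              mul_nonneg hA (Real.rpow_nonneg hs.1.le _)))]
  rw [integral_eq_lintegral_of_nonneg_ae (.of_forall hf0) hfm.aestronglyMeasurable,
    lintegral_eq_lintegral_meas_lt μ (.of_forall hf0) hfm.aemeasurable]
  exact ENNReal.toReal_le_of_le_ofReal
    (mul_nonneg hA (div_nonneg (by positivity) (by linarith))) hlayer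

section PoissonIntegral

variable {μ : Measure ℝ} {α D : ℝ}

lemma measure_lt_upperPoissonKernel_le
    (hμ : ∀ x r, 0 < r → μ (Ioo (x - r) (x + r)) ≤ ENNReal.ofReal (D * (2 * r) ^ α))
    {c : ℝ} (hc : c ≠ 0) (u : ℝ) {v s : ℝ} (hv : 0 < v) (hs : 0 < s) :
    μ {x | s < upperPoissonKernel v (c * x + u)}
      ≤ ENNReal.ofReal (D * (2 / |c|) ^ α * v ^ (α / 2) * s ^ (-(α / 2))) := by
  have hc' : 0 < |c| := abs_pos.2 hc
  set r := √(v / s) / |c|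
  have hsub : {x | s < upperPoissonKernel v (c * x + u)} ⊆ Ioo (-u / c - r) (-u / c + r) := by
    intro x hx
    have hlt := abs_lt_of_lt_upperPoissonKernel hv hs hx
    have : |x - -u / c| < r := by
      rw [lt_div_iff₀ hc', ← abs_mul, show (x - -u / c) * c = c * x + u by field_simp; ring]
      exact hlt
    exact ⟨by linarith [(abs_lt.1 this).1], by linarith [(abs_lt.1 this).2]⟩
  have hr : (2 * r) ^ α = (2 / |c|) ^ α * v ^ (α / 2) * s ^ (-(α / 2)) := by
    rw [show 2 * r = 2 / |c| * √(v / s) by ring, Real.mul_rpow (by positivity) (by positivity),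
      Real.sqrt_eq_rpow, ← Real.rpow_mul (by positivity), Real.div_rpow hv.le hs.le,
      Real.rpow_neg hs.le, show 1 / 2 * α = α / 2 by ring]
    ring
  calc μ {x | s < upperPoissonKernel v (c * x + u)} ≤ μ (Ioo (-u / c - r) (-u / c + r)) :=
        measure_mono hsub
    _ ≤ _ := hμ _ r (by positivity)
    _ = _ := by rw [hr, mul_assoc, mul_assoc, mul_assoc]

lemma integral_upperPoissonKernel_le (hα : α < 2) (hD : 0 ≤ D)
    (hμ : ∀ x r, 0 < r → μ (Ioo (x - r) (x + r)) ≤ ENNReal.ofReal (D * (2 * r) ^ α))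
    {c : ℝ} (hc : c ≠ 0) (u : ℝ) {v : ℝ} (hv : 0 < v) :
    ∫ x, upperPoissonKernel v (c * x + u) ∂μ
      ≤ D * (2 / |c|) ^ α * v ^ (α - 1) * (1 - α / 2)⁻¹ := by
  have hbound := integral_le_of_meas_lt_le_rpow (μ := μ)
    (fun x => upperPoissonKernel_nonneg hv (c * x + u))
    ((continuous_upperPoissonKernel hv).comp (by fun_prop)).measurable
    (by positivity) (by linarith) (inv_pos.2 hv) (fun x => upperPoissonKernel_le hv _)
    fun s hs _ => measure_lt_upperPoissonKernel_le hμ hc u hv hs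
  refine hbound.trans_eq ?_
  have hpow : v ^ (α / 2) * v⁻¹ ^ (1 - α / 2) = v ^ (α - 1) := by
    rw [Real.inv_rpow hv.le, ← Real.rpow_neg hv.le, ← Real.rpow_add hv]
    ring_nf
  rw [← hpow]
  ring

end PoissonIntegral

lemma measure_Ioo_le_integral_upperPoissonKernel {ρ : Measure ℝ} [IsFiniteMeasure ρ] (E : ℝ)
    {ε : ℝ} (hε : 0 < ε) :
    ρ (Ioo (E - ε) (E + ε)) ≤ ENNReal.ofReal (2 * ε * ∫ x, upperPoissonKernel ε (x - E) ∂ρ) := by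
  have hint := integrable_upperPoissonKernel_sub (ρ := ρ) hε E
  have hset : (2 * ε)⁻¹ * ρ.real (Ioo (E - ε) (E + ε))
      ≤ ∫ x in Ioo (E - ε) (E + ε), upperPoissonKernel ε (x - E) ∂ρ :=
    setIntegral_ge_of_const_le_real measurableSet_Ioo (measure_ne_top ρ _)
      (fun x hx => inv_two_mul_le_upperPoissonKernel hε
        (abs_sub_lt_iff.2 ⟨by linarith [hx.2], by linarith [hx.1]⟩)) hint.integrableOn
  have hwhole := setIntegral_le_integral (s := Ioo (E - ε) (E + ε)) hint
    (.of_forall fun x => upperPoissonKernel_nonneg hε (x - E))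
  rw [← ofReal_measureReal]
  refine ENNReal.ofReal_le_ofReal ?_
  rw [inv_mul_le_iff₀ (by positivity)] at hset
  exact hset.trans (mul_le_mul_of_nonneg_left hwhole (by positivity))

lemma im_integral_inv_mul_add {μ : Measure ℝ} [IsFiniteMeasure μ] (c : ℝ) {w : ℂ}
    (hw : w.im ≠ 0) :
    (∫ x : ℝ, ((c : ℂ) * x + w)⁻¹ ∂μ).im = ∫ x, upperPoissonKernel (-w.im) (c * x + w.re) ∂μ := by
  have h := integral_im (integrable_inv_of_im_eq (ρ := μ) (f := fun x : ℝ => (c : ℂ) * x + w)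
    (by fun_prop) hw fun x => by simp)
  simp only [RCLike.im_to_complex, im_inv_eq_upperPoissonKernel] at h
  rw [← h]
  simp

lemma measure_Ioo_le_of_im_borelTransform_eq {μ σ ν : Measure ℝ} [IsProbabilityMeasure μ]
    [IsProbabilityMeasure σ] [IsFiniteMeasure ν] {α D : ℝ} (hα : α ≤ 1) (hD : 0 ≤ D)
    (hμ : ∀ x r, 0 < r → μ (Ioo (x - r) (x + r)) ≤ ENNReal.ofReal (D * (2 * r) ^ α))
    {c : ℝ} (hc : c ≠ 0)
    (hν : ∀ E t : ℝ, 0 < t → (borelTransform ν (E + t * I)).im =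
      (∫ x : ℝ, ((c : ℂ) * x + (borelTransform σ (E + t * I))⁻¹)⁻¹ ∂μ).im)
    (E : ℝ) {ε : ℝ} (hε : 0 < ε) :
    ν (Ioo (E - ε) (E + ε)) ≤ ENNReal.ofReal (4 * |c| ^ (-α) * D * (2 * ε) ^ α) := by
  set z : ℂ := E + ε * I
  have hz : z.im = ε := by simp [z]
  have hzre : z.re = E := by simp [z]
  set w := (borelTransform σ z)⁻¹
  have hεv : ε ≤ -w.im := hz ▸ le_neg_im_inv_borelTransform (hz ▸ hε)
  have hv : 0 < -w.im := hε.trans_le hεv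
  have hupper : (borelTransform ν z).im ≤ D * (2 / |c|) ^ α * ε ^ (α - 1) * 2 := by
    rw [hν E ε hε, im_integral_inv_mul_add c (neg_ne_zero.1 hv.ne')]
    have hpow : (-w.im) ^ (α - 1) ≤ ε ^ (α - 1) := Real.rpow_le_rpow_of_nonpos hε hεv (by linarith)
    have hinv : (1 - α / 2)⁻¹ ≤ 2 := by
      rw [inv_le_comm₀ (by linarith) two_pos]
      linarith
    exact (integral_upperPoissonKernel_le (by linarith) hD hμ hc w.re hv).trans
      (mul_le_mul (mul_le_mul_of_nonneg_left hpow (by positivity)) hinv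
        (inv_nonneg.2 (by linarith)) (by positivity))
  have hlower := measure_Ioo_le_integral_upperPoissonKernel (ρ := ν) E hε
  rw [← hzre, ← hz, ← im_borelTransform (hz ▸ hε.ne'), hz, hzre] at hlower
  refine hlower.trans (ENNReal.ofReal_le_ofReal ?_)
  calc 2 * ε * (borelTransform ν z).im ≤ 2 * ε * (D * (2 / |c|) ^ α * ε ^ (α - 1) * 2) := by
        gcongr
    _ = 4 * |c| ^ (-α) * D * (2 * ε) ^ α := by
        rw [Real.div_rpow zero_le_two (abs_nonneg c), Real.rpow_neg (abs_nonneg c),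
          Real.mul_rpow zero_le_two hε.le, Real.rpow_sub_one hε.ne']
        field_simp
        ring

section DAlpha

variable {ρ : Measure ℝ} {α : ℝ}

lemma measure_Ioo_le_dAlpha_mul (x : ℝ) {ε : ℝ} (hε : 0 < ε) :
    ρ (Ioo (x - ε) (x + ε)) ≤ dAlpha ρ α * ENNReal.ofReal ((2 * ε) ^ α) := by
  have hle : ρ (Ioo (x - ε) (x + ε)) / ENNReal.ofReal ((2 * ε) ^ α) ≤ dAlpha ρ α :=
    le_iSup₂_of_le x ε (le_iSup_of_le hε le_rfl)
  exact (ENNReal.div_le_iff_le_mul (.inl (by simp; positivity)) (.inl ENNReal.ofReal_ne_top)).1 hle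

lemma measure_Ioo_le_ofReal_toReal_dAlpha_mul (hρ : dAlpha ρ α ≠ ⊤) (x : ℝ) {ε : ℝ}
    (hε : 0 < ε) :
    ρ (Ioo (x - ε) (x + ε)) ≤ ENNReal.ofReal ((dAlpha ρ α).toReal * (2 * ε) ^ α) := by
  rw [ENNReal.ofReal_mul ENNReal.toReal_nonneg, ENNReal.ofReal_toReal hρ]
  exact measure_Ioo_le_dAlpha_mul x hε

lemma dAlpha_le_ofReal {M : ℝ} (hM : 0 ≤ M)
    (h : ∀ x ε, 0 < ε → ρ (Ioo (x - ε) (x + ε)) ≤ ENNReal.ofReal (M * (2 * ε) ^ α)) :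
    dAlpha ρ α ≤ ENNReal.ofReal M :=
  iSup₂_le fun x ε => iSup_le fun hε => ENNReal.div_le_of_le_mul <|
    (ENNReal.ofReal_mul hM) ▸ h x ε hε

lemma dAlpha_sum_smul_le {ι : Type*} [Countable ι] (w : ι → ENNReal) (ν : ι → Measure ℝ) :
    dAlpha (Measure.sum fun n => w n • ν n) α ≤ ∑' n, w n * dAlpha (ν n) α := by
  refine iSup₂_le fun x ε => iSup_le fun hε => ENNReal.div_le_of_le_mul ?_
  rw [Measure.sum_apply _ measurableSet_Ioo, ← ENNReal.tsum_mul_right]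
  refine ENNReal.tsum_le_tsum fun n => ?_
  rw [Measure.smul_apply, smul_eq_mul, mul_assoc]
  exact mul_le_mul_right (measure_Ioo_le_dAlpha_mul x hε) _

end DAlpha

lemma four_le_two_rpow_two_sub_mul_pi {α : ℝ} (hα : α ≤ 1) : 4 ≤ 2 ^ (2 - α) * Real.pi := by
  have h : (2 : ℝ) ≤ 2 ^ (2 - α) := by
    simpa using Real.rpow_le_rpow_of_exponent_le one_le_two (by linarith : (1 : ℝ) ≤ 2 - α)
  nlinarith [Real.pi_gt_three]

theorem stmt17_general (α : ℝ) (hα1 : α ≤ 1)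
    (μ : Measure ℝ) [IsProbabilityMeasure μ] (hμ : dAlpha μ α ≠ ⊤)
    (a : ℕ → ℝ) (ha : ∀ n, a n ≠ 0)
    (σ : ℕ → Measure ℝ) [∀ n, IsProbabilityMeasure (σ n)]
    (ν : ℕ → Measure ℝ) [∀ n, IsProbabilityMeasure (ν n)]
    (hν : ∀ (n : ℕ) (E : ℝ) (t : ℝ), 0 < t →
      (borelTransform (ν n) ((E : ℂ) + (t : ℂ) * Complex.I)).im =
        (∫ x : ℝ,
          ((a n : ℂ) * (x : ℂ) +
            (borelTransform (σ n) ((E : ℂ) + (t : ℂ) * Complex.I))⁻¹)⁻¹ ∂μ).im) :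
    (∀ n, dAlpha (ν n) α ≠ ⊤ ∧
      dAlpha (ν n) α ≤
        ENNReal.ofReal (2 ^ (2 - α) * Real.pi * |a n| ^ (-α)) * dAlpha μ α) ∧
    ∀ β : ℕ → ℝ, (∀ n, 0 < β n) → (∑' n, β n) = 1 →
      Summable (fun n => β n * |a n| ^ (-α)) →
      dAlpha (Measure.sum (fun n => ENNReal.ofReal (β n) • ν n)) α ≠ ⊤ ∧
      dAlpha (Measure.sum (fun n => ENNReal.ofReal (β n) • ν n)) α ≤
        ENNReal.ofReal (2 ^ (2 - α) * Real.pi) * dAlpha μ α *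
          ENNReal.ofReal (∑' n, β n * |a n| ^ (-α)) := by
  set K := 2 ^ (2 - α) * Real.pi
  have hK : 4 ≤ K := four_le_two_rpow_two_sub_mul_pi hα1
  have hν_le : ∀ n, dAlpha (ν n) α ≤ ENNReal.ofReal (K * |a n| ^ (-α)) * dAlpha μ α := by
    intro n
    rw [← ENNReal.ofReal_toReal hμ, ← ENNReal.ofReal_mul (by positivity)]
    refine dAlpha_le_ofReal (by positivity) fun E ε hε =>
      (measure_Ioo_le_of_im_borelTransform_eq hα1 ENNReal.toReal_nonneg
        (fun x r hr => measure_Ioo_le_ofReal_toReal_dAlpha_mul hμ x hr) (ha n) (hν n) E hε).trans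
      (ENNReal.ofReal_le_ofReal ?_)
    gcongr
  refine ⟨fun n => ⟨ne_top_of_le_ne_top (ENNReal.mul_ne_top ENNReal.ofReal_ne_top hμ) (hν_le n),
    hν_le n⟩, fun β hβ _ hsum => ?_⟩
  have hmix : dAlpha (Measure.sum fun n => ENNReal.ofReal (β n) • ν n) α
      ≤ ENNReal.ofReal K * dAlpha μ α * ENNReal.ofReal (∑' n, β n * |a n| ^ (-α)) :=
    calc _ ≤ ∑' n, ENNReal.ofReal (β n) * dAlpha (ν n) α := dAlpha_sum_smul_le _ _
      _ ≤ ∑' n, ENNReal.ofReal (β n) * (ENNReal.ofReal (K * |a n| ^ (-α)) * dAlpha μ α) :=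
        ENNReal.tsum_le_tsum fun n => mul_le_mul_right (hν_le n) _
      _ = _ := by
        rw [ENNReal.ofReal_tsum_of_nonneg (fun n => by have := hβ n; positivity) hsum,
          ← ENNReal.tsum_mul_left]
        refine tsum_congr fun n => ?_
        rw [ENNReal.ofReal_mul (by positivity), ENNReal.ofReal_mul (hβ n).le]
        ring
  exact ⟨ne_top_of_le_ne_top (by finiteness) hmix, hmix⟩

theorem stmt17 (α : ℝ) (hα0 : 0 < α) (hα1 : α ≤ 1)
    (μ : Measure ℝ) [IsProbabilityMeasure μ] (hμ : dAlpha μ α ≠ ⊤)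
    (a : ℕ → ℝ) (ha : ∀ n, a n ≠ 0)
    (σ : ℕ → Measure ℝ) [∀ n, IsProbabilityMeasure (σ n)]
    (ν : ℕ → Measure ℝ) [∀ n, IsProbabilityMeasure (ν n)]
    (hν : ∀ (n : ℕ) (E : ℝ) (t : ℝ), 0 < t →
      (borelTransform (ν n) ((E : ℂ) + (t : ℂ) * Complex.I)).im =
        (∫ x : ℝ,
          ((a n : ℂ) * (x : ℂ) +
            (borelTransform (σ n) ((E : ℂ) + (t : ℂ) * Complex.I))⁻¹)⁻¹ ∂μ).im) :
    (∀ n, dAlpha (ν n) α ≠ ⊤ ∧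
      dAlpha (ν n) α ≤
        ENNReal.ofReal (2 ^ (2 - α) * Real.pi * |a n| ^ (-α)) * dAlpha μ α) ∧
    ∀ β : ℕ → ℝ, (∀ n, 0 < β n) → (∑' n, β n) = 1 →
      Summable (fun n => β n * |a n| ^ (-α)) →
      dAlpha (Measure.sum (fun n => ENNReal.ofReal (β n) • ν n)) α ≠ ⊤ ∧
      dAlpha (Measure.sum (fun n => ENNReal.ofReal (β n) • ν n)) α ≤
        ENNReal.ofReal (2 ^ (2 - α) * Real.pi) * dAlpha μ α *
          ENNReal.ofReal (∑' n, β n * |a n| ^ (-α)) :=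
  stmt17_general α hα1 μ hμ a ha σ ν hν
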